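/- arXiv:0907.1794 — 3 statements merged into one kernel-verified Lean document; each statement's English description precedes it below -/
import Mathlib

section
/- For every family of measurable functions a_1,…,a_n and b_1,…,b_n from ℝ to ℝ satisfying E[∑_{i=1}^n a_i²(X_i)] ≤ 1 and E[∑_{l=1}^n b_l²(X_l)] ≤ 1, one has ∑_{i=2}^n ∑_{l=1}^{i−1} E[(g(X_i) − β) a_i(X_i)] · E[(g(X_l) − β) b_l(X_l)] ≤ σ² √(n(n−1)/2). -/
open MeasureTheory ProbabilityTheory Filter
open scoped ENNReal NNReal BigOperators

noncomputable section

/-- Sup norm `‖g‖_∞ = sup_x |g x|` of a (bounded) function. -/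
def supNorm (g : ℝ → ℝ) : ℝ := ⨆ x : ℝ, |g x|

/-- The Haar wavelets on `ℝ`: `ψ_{-1,k} = 1_{[k,k+1)}` and, for `j ≥ 0`,
`ψ_{jk} = 2^{j/2} (1_{[k2^{-j},(k+1/2)2^{-j})} - 1_{[(k+1/2)2^{-j},(k+1)2^{-j})})`. -/
def haar (j k : ℤ) (x : ℝ) : ℝ :=
  if j = -1 then (Set.Ico (k : ℝ) ((k : ℝ) + 1)).indicator (fun _ => (1 : ℝ)) x
  else (2 : ℝ) ^ ((j : ℝ) / 2) *
    ((Set.Ico ((k : ℝ) * (2 : ℝ) ^ (-j)) (((k : ℝ) + 1 / 2) * (2 : ℝ) ^ (-j))).indicator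
        (fun _ => (1 : ℝ)) x
      - (Set.Ico (((k : ℝ) + 1 / 2) * (2 : ℝ) ^ (-j)) (((k : ℝ) + 1) * (2 : ℝ) ^ (-j))).indicator
        (fun _ => (1 : ℝ)) x)

/-- `‖ψ_{jk}‖_∞`, i.e. `1` if `j = -1` and `2^{j/2}` otherwise. -/
def haarSupNorm (j : ℤ) : ℝ := if j = -1 then 1 else (2 : ℝ) ^ ((j : ℝ) / 2)

/-- The Haar wavelet coefficient `β_{jk} = ∫ ψ_{jk} f`. -/
def haarCoef (f : ℝ → ℝ) (j k : ℤ) : ℝ := ∫ x : ℝ, haar j k x * f x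

/-- `σ_{jk}² = ∫ ψ_{jk}² f − β_{jk}²`. -/
def haarVar (f : ℝ → ℝ) (j k : ℤ) : ℝ := (∫ x : ℝ, (haar j k x) ^ 2 * f x) - (haarCoef f j k) ^ 2

/-- Empirical coefficient `n⁻¹ ∑ᵢ g(Yᵢ)` for data `Y`. -/
def empCoefG {n : ℕ} (g : ℝ → ℝ) (Y : Fin n → ℝ) : ℝ := (n : ℝ)⁻¹ * ∑ i, g (Y i)

/-- Empirical variance estimator
`σ̂² = (n(n−1))⁻¹ ∑_{i} ∑_{l<i} (g(Yᵢ) − g(Y_l))²`. -/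
def empVarG {n : ℕ} (g : ℝ → ℝ) (Y : Fin n → ℝ) : ℝ :=
  ((n : ℝ) * ((n : ℝ) - 1))⁻¹ *
    ∑ i : Fin n, ∑ l ∈ Finset.univ.filter (fun l => l < i), (g (Y i) - g (Y l)) ^ 2

/-- `σ̃² = σ̂² + 2M√(2γσ̂² (ln n)/n) + 8γM² (ln n)/n`, `M` playing the role of `‖g‖_∞`. -/
def tildeVarG {n : ℕ} (γ M : ℝ) (g : ℝ → ℝ) (Y : Fin n → ℝ) : ℝ :=
  empVarG g Y + 2 * M * Real.sqrt (2 * γ * empVarG g Y * Real.log n / n)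
    + 8 * γ * M ^ 2 * Real.log n / n

/-- The threshold `η = √(2γσ̃² (ln n)/n) + 2Mγ(ln n)/(3n)`. -/
def threshG {n : ℕ} (γ M : ℝ) (g : ℝ → ℝ) (Y : Fin n → ℝ) : ℝ :=
  Real.sqrt (2 * γ * tildeVarG γ M g Y * Real.log n / n) + 2 * M * γ * Real.log n / (3 * n)

/-- `β̂_{jk}` computed from data `Y`. -/
def empCoef {n : ℕ} (j k : ℤ) (Y : Fin n → ℝ) : ℝ := empCoefG (haar j k) Y

/-- `σ̂_{jk}²` computed from data `Y`. -/
def empVar {n : ℕ} (j k : ℤ) (Y : Fin n → ℝ) : ℝ := empVarG (haar j k) Y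

/-- `σ̃_{jk}²` computed from data `Y`. -/
def tildeVar {n : ℕ} (γ : ℝ) (j k : ℤ) (Y : Fin n → ℝ) : ℝ :=
  tildeVarG γ (haarSupNorm j) (haar j k) Y

/-- The threshold `η_{jk,γ}` computed from data `Y`. -/
def thresh {n : ℕ} (γ : ℝ) (j k : ℤ) (Y : Fin n → ℝ) : ℝ :=
  threshG γ (haarSupNorm j) (haar j k) Y

/-- `j₀ = ⌊log₂(n^c (ln n)^{c'})⌋`. -/
def jmax (n : ℕ) (c c' : ℝ) : ℤ := ⌊Real.logb 2 ((n : ℝ) ^ c * (Real.log n) ^ c')⌋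

/-- The Haar thresholding estimator
`f̃_{n,γ} = ∑_{(j,k) ∈ Γ_n} β̂_{jk} 1_{|β̂_{jk}| ≥ η_{jk,γ}} ψ_{jk}` built from data `Y`. -/
def haarEstimator {n : ℕ} (γ c c' : ℝ) (Y : Fin n → ℝ) (x : ℝ) : ℝ :=
  ∑ j ∈ Finset.Icc (-1 : ℤ) (jmax n c c'),
    ∑' k : ℤ, (if thresh γ j k Y ≤ |empCoef j k Y| then empCoef j k Y else 0) * haar j k x

/-- `f` is a probability density on `ℝ`. -/
def IsDensity (f : ℝ → ℝ) : Prop :=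
  Measurable f ∧ (∀ x, 0 ≤ f x) ∧ (∫ x : ℝ, f x) = 1

/-- `X₁, …, X_n` are i.i.d. random variables with density `f` (w.r.t. Lebesgue measure). -/
def IsIIDSample {Ω : Type*} [MeasurableSpace Ω] (P : Measure Ω) {n : ℕ}
    (X : Fin n → Ω → ℝ) (f : ℝ → ℝ) : Prop :=
  (∀ i, Measurable (X i)) ∧
  iIndepFun X P ∧
  (∀ i, Measure.map (X i) P = volume.withDensity (fun x => ENNReal.ofReal (f x)))

/-- `X₁, …, X_n` are i.i.d. real random variables. -/
def IsIID {Ω : Type*} [MeasurableSpace Ω] (P : Measure Ω) {n : ℕ} (X : Fin n → Ω → ℝ) : Prop :=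
  (∀ i, Measurable (X i)) ∧
  iIndepFun X P ∧
  (∀ i i', Measure.map (X i) P = Measure.map (X i') P)

/-- The `ℓ^p` norm of a `ℤ`-indexed sequence, `p ∈ [1,∞]`. -/
def lpSeqNorm (p : ℝ≥0∞) (a : ℤ → ℝ) : ℝ≥0∞ :=
  if p = ∞ then ⨆ k : ℤ, (‖a k‖₊ : ℝ≥0∞)
  else (∑' k : ℤ, (‖a k‖₊ : ℝ≥0∞) ^ p.toReal) ^ (1 / p.toReal)

/-- The Besov norm `‖f‖_{α,p,q}` computed from the Haar coefficients of `f`. -/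
def besovNorm (α : ℝ) (p q : ℝ≥0∞) (f : ℝ → ℝ) : ℝ≥0∞ :=
  lpSeqNorm p (fun k => haarCoef f (-1) k) +
  (if q = ∞ then
      ⨆ j : ℕ, ((2 : ℝ≥0∞) ^ ((j : ℝ) * (α + 1 / 2 - 1 / p.toReal)) *
        lpSeqNorm p (fun k => haarCoef f (j : ℤ) k))
    else
      (∑' j : ℕ, ((2 : ℝ≥0∞) ^ ((j : ℝ) * (α + 1 / 2 - 1 / p.toReal)) *
        lpSeqNorm p (fun k => haarCoef f (j : ℤ) k)) ^ q.toReal) ^ (1 / q.toReal))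

/-! Cauchy–Schwarz in `L²(P)` bounds `|E[(g(Xᵢ) - m) aᵢ(Xᵢ)]|` by `σ √Aᵢ` with `Aᵢ = E[aᵢ²(Xᵢ)]`,
since every `g(Xᵢ)` has the law of `g(X₁)`; similarly for `b`. What is left is
`σ² ∑_{l<i} √Aᵢ √B_l`, and Cauchy–Schwarz over the `n(n-1)/2` pairs bounds that sum by
`√(n(n-1)/2) · √(∑ Aᵢ · ∑ B_l) ≤ √(n(n-1)/2)`. -/

open Finset

lemma abs_integral_mul_le_sqrt_mul_sqrt {Ω : Type*} [MeasurableSpace Ω] {μ : Measure Ω}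
    {u v : Ω → ℝ} (hu : MemLp u 2 μ) (hv : MemLp v 2 μ) :
    |∫ ω, u ω * v ω ∂μ| ≤ √(∫ ω, u ω ^ 2 ∂μ) * √(∫ ω, v ω ^ 2 ∂μ) := by
  have holder := integral_mul_norm_le_Lp_mul_Lq (μ := μ) Real.HolderConjugate.two_two
    (by simpa using hu) (by simpa using hv)
  simp only [Real.norm_eq_abs, Real.rpow_two, sq_abs, ← Real.sqrt_eq_rpow] at holder
  calc |∫ ω, u ω * v ω ∂μ| ≤ ∫ ω, |u ω| * |v ω| ∂μ := by
        simpa only [Real.norm_eq_abs, abs_mul] using norm_integral_le_integral_norm (fun ω => u ω * v ω)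
    _ ≤ _ := holder

lemma sum_sqrt_mul_sqrt_le_sqrt_card_mul {ι κ : Type*} [Fintype ι] [Fintype κ]
    (S : Finset (ι × κ)) {A : ι → ℝ} {B : κ → ℝ} (hA : ∀ i, 0 ≤ A i) (hB : ∀ k, 0 ≤ B k) :
    ∑ p ∈ S, √(A p.1) * √(B p.2) ≤ √(#S * ((∑ i, A i) * ∑ k, B k)) := by
  have hAB : ∀ p : ι × κ, 0 ≤ A p.1 * B p.2 := fun p => mul_nonneg (hA _) (hB _)
  calc ∑ p ∈ S, √(A p.1) * √(B p.2) = ∑ p ∈ S, √1 * √(A p.1 * B p.2) := by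
        simp only [Real.sqrt_one, one_mul, Real.sqrt_mul (hA _)]
    _ ≤ √(∑ p ∈ S, 1) * √(∑ p ∈ S, A p.1 * B p.2) :=
        Real.sum_sqrt_mul_sqrt_le S (fun _ => zero_le_one) hAB
    _ ≤ √(#S) * √((∑ i, A i) * ∑ k, B k) := by
        rw [sum_const, nsmul_one, sum_mul_sum, ← sum_product']
        gcongr
        · exact fun p _ _ => hAB p
        · exact subset_univ S
    _ = √(#S * ((∑ i, A i) * ∑ k, B k)) := (Real.sqrt_mul (Nat.cast_nonneg _) _).symm

lemma card_filter_snd_lt_fst (n : ℕ) :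
    (#(univ.filter fun p : Fin n × Fin n => p.2 < p.1) : ℝ) = n * (n - 1) / 2 := by
  have : #(univ.filter fun p : Fin n × Fin n => p.2 < p.1) = ∑ i : Fin n, (i : ℕ) := by
    rw [card_filter, ← univ_product_univ, sum_product]
    refine sum_congr rfl fun i _ => ?_
    rw [← card_filter, ← Fin.card_Iio]
    congr 1
    ext; simp
  rw [this, Fin.sum_univ_eq_sum_range (fun i => i), sum_range_id, ← Nat.choose_two_right,
    Nat.cast_choose_two]

lemma sum_sum_filter_lt_eq_sum_filter_snd_lt_fst {ι M : Type*} [Fintype ι] [LinearOrder ι]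
    [AddCommMonoid M] (f : ι → ι → M) :
    ∑ i, ∑ l ∈ univ.filter (· < i), f i l =
      ∑ p ∈ univ.filter fun p : ι × ι => p.2 < p.1, f p.1 p.2 := by
  rw [sum_filter, ← univ_product_univ, sum_product]
  simp only [sum_filter]

lemma IsIID.integral_comp_eq {Ω : Type*} [MeasurableSpace Ω] {P : Measure Ω} {n : ℕ}
    {X : Fin n → Ω → ℝ} (hX : IsIID P X) {φ : ℝ → ℝ} (hφ : Measurable φ) (i j : Fin n) :
    ∫ ω, φ (X i ω) ∂P = ∫ ω, φ (X j ω) ∂P :=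
  (IdentDistrib.mk (hX.1 i).aemeasurable (hX.1 j).aemeasurable (hX.2.2 i j)).comp hφ |>.integral_eq

lemma IsIID.abs_integral_sub_mul_le {Ω : Type*} [MeasurableSpace Ω] {P : Measure Ω}
    [IsFiniteMeasure P] {n : ℕ} {X : Fin n → Ω → ℝ} (hX : IsIID P X) {g : ℝ → ℝ}
    (hg : Measurable g) (hgb : ∃ C, ∀ x, |g x| ≤ C) (m : ℝ) {c : ℝ → ℝ} (hc : Measurable c)
    {i : Fin n} (hci : Integrable (fun ω => c (X i ω) ^ 2) P) (j : Fin n) :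
    |∫ ω, (g (X i ω) - m) * c (X i ω) ∂P| ≤
      √(∫ ω, (g (X j ω) - m) ^ 2 ∂P) * √(∫ ω, c (X i ω) ^ 2 ∂P) := by
  obtain ⟨C, hC⟩ := hgb
  have hcentered : MemLp (fun ω => g (X i ω) - m) 2 P :=
    .of_bound ((hg.comp (hX.1 i)).sub_const m).aestronglyMeasurable (C + |m|)
      (ae_of_all _ fun ω => (norm_sub_le _ _).trans (add_le_add (hC _) le_rfl))
  rw [← hX.integral_comp_eq ((hg.sub_const m).pow_const 2) i j]
  exact abs_integral_mul_le_sqrt_mul_sqrt hcentered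
    ((memLp_two_iff_integrable_sq (hc.comp (hX.1 i)).aestronglyMeasurable).2 hci)

theorem statement7_general (n : ℕ) (hn : 1 ≤ n)
    (Ω : Type*) [MeasurableSpace Ω] (P : Measure Ω) [IsProbabilityMeasure P]
    (X : Fin n → Ω → ℝ) (hX : IsIID P X)
    (g : ℝ → ℝ) (hg : Measurable g) (hgb : ∃ B, ∀ x, |g x| ≤ B)
    (a b : Fin n → ℝ → ℝ)
    (ham : ∀ i, Measurable (a i)) (hbm : ∀ i, Measurable (b i))
    (hai : ∀ i, Integrable (fun ω => (a i (X i ω)) ^ 2) P)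
    (hbi : ∀ i, Integrable (fun ω => (b i (X i ω)) ^ 2) P)
    (ha1 : (∫ ω, ∑ i, (a i (X i ω)) ^ 2 ∂P) ≤ 1)
    (hb1 : (∫ ω, ∑ i, (b i (X i ω)) ^ 2 ∂P) ≤ 1)
    (m s2 : ℝ)
    (hs2 : s2 = ∫ ω, (g (X ⟨0, hn⟩ ω) - m) ^ 2 ∂P) :
    ∑ i : Fin n, ∑ l ∈ Finset.univ.filter (fun l => l < i),
        (∫ ω, (g (X i ω) - m) * a i (X i ω) ∂P) * (∫ ω, (g (X l ω) - m) * b l (X l ω) ∂P)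
      ≤ s2 * Real.sqrt ((n : ℝ) * ((n : ℝ) - 1) / 2) := by
  set A : Fin n → ℝ := fun i => ∫ ω, a i (X i ω) ^ 2 ∂P
  set B : Fin n → ℝ := fun l => ∫ ω, b l (X l ω) ^ 2 ∂P
  have hA_nonneg (i : Fin n) : 0 ≤ A i := integral_nonneg fun ω => sq_nonneg _
  have hB_nonneg (l : Fin n) : 0 ≤ B l := integral_nonneg fun ω => sq_nonneg _
  have hs2_nonneg : 0 ≤ s2 := hs2 ▸ integral_nonneg fun ω => sq_nonneg _
  have hterm (i l : Fin n) :
      (∫ ω, (g (X i ω) - m) * a i (X i ω) ∂P) * (∫ ω, (g (X l ω) - m) * b l (X l ω) ∂P)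
        ≤ s2 * (√(A i) * √(B l)) :=
    calc _ ≤ |∫ ω, (g (X i ω) - m) * a i (X i ω) ∂P| * |∫ ω, (g (X l ω) - m) * b l (X l ω) ∂P| :=
          (le_abs_self _).trans_eq (abs_mul _ _)
      _ ≤ (√s2 * √(A i)) * (√s2 * √(B l)) :=
          mul_le_mul (hs2 ▸ hX.abs_integral_sub_mul_le hg hgb m (ham i) (hai i) ⟨0, hn⟩)
            (hs2 ▸ hX.abs_integral_sub_mul_le hg hgb m (hbm l) (hbi l) ⟨0, hn⟩)
            (abs_nonneg _) (by positivity)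
      _ = s2 * (√(A i) * √(B l)) := by rw [mul_mul_mul_comm, Real.mul_self_sqrt hs2_nonneg]
  have hA : ∑ i, A i ≤ 1 := by rwa [← integral_finsetSum _ fun i _ => hai i]
  have hB : ∑ l, B l ≤ 1 := by rwa [← integral_finsetSum _ fun l _ => hbi l]
  calc _ ≤ ∑ i, ∑ l ∈ univ.filter (· < i), s2 * (√(A i) * √(B l)) :=
        sum_le_sum fun i _ => sum_le_sum fun l _ => hterm i l
    _ = s2 * ∑ p ∈ univ.filter fun p : Fin n × Fin n => p.2 < p.1, √(A p.1) * √(B p.2) := by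
        rw [sum_sum_filter_lt_eq_sum_filter_snd_lt_fst, mul_sum]
    _ ≤ s2 * √(n * (n - 1) / 2 * ((∑ i, A i) * ∑ l, B l)) := by
        rw [← card_filter_snd_lt_fst]
        gcongr
        exact sum_sqrt_mul_sqrt_le_sqrt_card_mul _ hA_nonneg hB_nonneg
    _ ≤ s2 * √(n * (n - 1) / 2) := by
        gcongr
        exact mul_le_of_le_one_right (card_filter_snd_lt_fst n ▸ Nat.cast_nonneg _)
          (mul_le_one₀ hA (sum_nonneg fun l _ => hB_nonneg l) hB)

/-- The bound on the quantity `D` of Houdré–Reynaud-Bouret's inequality: if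
`E∑ aᵢ²(Xᵢ) ≤ 1` and `E∑ b_l²(X_l) ≤ 1` then
`∑_{i=2}^n ∑_{l<i} E[(g(Xᵢ)−β)aᵢ(Xᵢ)] E[(g(X_l)−β)b_l(X_l)] ≤ σ² √(n(n−1)/2)`. -/
theorem statement7 (n : ℕ) (hn : 1 ≤ n)
    (Ω : Type*) [MeasurableSpace Ω] (P : Measure Ω) [IsProbabilityMeasure P]
    (X : Fin n → Ω → ℝ) (hX : IsIID P X)
    (g : ℝ → ℝ) (hg : Measurable g) (hgb : ∃ B, ∀ x, |g x| ≤ B)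
    (a b : Fin n → ℝ → ℝ)
    (ham : ∀ i, Measurable (a i)) (hbm : ∀ i, Measurable (b i))
    (hai : ∀ i, Integrable (fun ω => (a i (X i ω)) ^ 2) P)
    (hbi : ∀ i, Integrable (fun ω => (b i (X i ω)) ^ 2) P)
    (ha1 : (∫ ω, ∑ i, (a i (X i ω)) ^ 2 ∂P) ≤ 1)
    (hb1 : (∫ ω, ∑ i, (b i (X i ω)) ^ 2 ∂P) ≤ 1)
    (m s2 : ℝ) (hm : m = ∫ ω, g (X ⟨0, hn⟩ ω) ∂P)
    (hs2 : s2 = ∫ ω, (g (X ⟨0, hn⟩ ω) - m) ^ 2 ∂P) :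
    ∑ i : Fin n, ∑ l ∈ Finset.univ.filter (fun l => l < i),
        (∫ ω, (g (X i ω) - m) * a i (X i ω) ∂P) * (∫ ω, (g (X l ω) - m) * b l (X l ω) ∂P)
      ≤ s2 * Real.sqrt ((n : ℝ) * ((n : ℝ) - 1) / 2) :=
  statement7_general n hn Ω P X hX g hg hgb a b ham hbm hai hbi ha1 hb1 m s2 hs2

end
end

section
/- For n ≥ 2, E[ max_{1 ≤ i ≤ n} | ∑_{l=1}^{i−1} (g(X_l) − β) | ] ≤ ‖g‖_∞ √(2(n−1) ln(2n)), where the sum over l from 1 to 0 is interpreted as 0. -/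
open MeasureTheory ProbabilityTheory Filter
open scoped ENNReal NNReal BigOperators

noncomputable section

/-! Each partial sum `∑_{l<i} (g(X_l) − β)` is a sum of at most `n − 1` independent centred
variables with values in an interval of length `2‖g‖_∞`, hence sub-Gaussian with variance proxy
`(n − 1)‖g‖_∞²` by Hoeffding's lemma. For finitely many `c`-sub-Gaussian variables `Z_1, …, Z_N`,
Jensen's inequality and `exp (t |z|) ≤ exp (t z) + exp (-t z)` give
`exp (t E[max |Z_i|]) ≤ E[exp (t max |Z_i|)] ≤ 2N exp (c t² / 2)`,
and optimizing over `t > 0` yields `E[max |Z_i|] ≤ √(2c ln(2N))`. -/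

open Real

namespace ProbabilityTheory

variable {Ω : Type*} {mΩ : MeasurableSpace Ω} {μ : Measure Ω}

lemma HasSubgaussianMGF.mono {X : Ω → ℝ} {c c' : ℝ≥0} (h : HasSubgaussianMGF X c μ)
    (hc : c ≤ c') : HasSubgaussianMGF X c' μ where
  integrable_exp_mul := h.integrable_exp_mul
  mgf_le t := (h.mgf_le t).trans (exp_le_exp.2 (by gcongr))

lemma hasSubgaussianMGF_sub_integral_of_abs_le [IsProbabilityMeasure μ] {X : Ω → ℝ} {M : ℝ}
    (hX : AEMeasurable X μ) (hM : ∀ ω, |X ω| ≤ M) :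
    HasSubgaussianMGF (fun ω ↦ X ω - μ[X]) (‖M‖₊ ^ 2) μ := by
  have h := hasSubgaussianMGF_of_mem_Icc hX (ae_of_all μ fun ω ↦ abs_le.1 (hM ω))
  convert h using 2
  rw [sub_neg_eq_add, ← two_mul, nnnorm_mul]
  simp

section Maximal

variable {ι : Type*} [Fintype ι] [Nonempty ι] {Z : ι → Ω → ℝ} {c : ℝ≥0}

lemma exp_mul_iSup_abs_le_sum {t : ℝ} (ht : 0 ≤ t) (z : ι → ℝ) :
    exp (t * ⨆ i, |z i|) ≤ ∑ i, (exp (t * z i) + exp (-t * z i)) := by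
  obtain ⟨j, hj⟩ := Finite.exists_max fun i ↦ |z i|
  calc exp (t * ⨆ i, |z i|) ≤ exp |t * z j| := by
        rw [abs_mul, abs_of_nonneg ht]
        gcongr
        exact ciSup_le hj
    _ ≤ exp (t * z j) + exp (-t * z j) := by
        rw [neg_mul]
        exact exp_abs_le _
    _ ≤ ∑ i, (exp (t * z i) + exp (-t * z i)) :=
        Finset.single_le_sum (f := fun i ↦ exp (t * z i) + exp (-t * z i))
          (fun i _ ↦ by positivity) (Finset.mem_univ j)

lemma integrable_iSup_abs (hZ : ∀ i, HasSubgaussianMGF (Z i) c μ) :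
    Integrable (fun ω ↦ ⨆ i, |Z i ω|) μ := by
  refine (integrable_finsetSum Finset.univ fun i _ ↦ (hZ i).integrable.abs).mono'
    (AEMeasurable.iSup fun i ↦ (hZ i).aemeasurable.abs).aestronglyMeasurable
    (ae_of_all μ fun ω ↦ ?_)
  have hsup : ⨆ i, |Z i ω| ≤ ∑ i, |Z i ω| := ciSup_le fun i ↦
    Finset.single_le_sum (f := fun i ↦ |Z i ω|) (fun i _ ↦ abs_nonneg _) (Finset.mem_univ i)
  rwa [Real.norm_of_nonneg (le_ciSup_of_le (Set.finite_range _).bddAbove (Classical.arbitrary ι)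
    (abs_nonneg _))]

lemma integrable_exp_mul_iSup_abs (hZ : ∀ i, HasSubgaussianMGF (Z i) c μ) {t : ℝ} (ht : 0 ≤ t) :
    Integrable (fun ω ↦ exp (t * ⨆ i, |Z i ω|)) μ :=
  (integrable_finsetSum Finset.univ fun i _ ↦
      ((hZ i).integrable_exp_mul t).add ((hZ i).integrable_exp_mul (-t))).mono'
    ((integrable_iSup_abs hZ).aemeasurable.const_mul t).exp.aestronglyMeasurable
    (ae_of_all μ fun ω ↦ by
      simpa [Finset.sum_apply] using exp_mul_iSup_abs_le_sum ht fun i ↦ Z i ω)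

lemma integral_exp_mul_iSup_abs_le (hZ : ∀ i, HasSubgaussianMGF (Z i) c μ) {t : ℝ} (ht : 0 ≤ t) :
    ∫ ω, exp (t * ⨆ i, |Z i ω|) ∂μ ≤ 2 * Fintype.card ι * exp (c * t ^ 2 / 2) := by
  have hint (i : ι) : Integrable (fun ω ↦ exp (t * Z i ω) + exp (-t * Z i ω)) μ :=
    ((hZ i).integrable_exp_mul t).add ((hZ i).integrable_exp_mul (-t))
  calc ∫ ω, exp (t * ⨆ i, |Z i ω|) ∂μ
      ≤ ∫ ω, ∑ i, (exp (t * Z i ω) + exp (-t * Z i ω)) ∂μ :=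
        integral_mono (integrable_exp_mul_iSup_abs hZ ht)
          (integrable_finsetSum Finset.univ fun i _ ↦ hint i)
          fun ω ↦ exp_mul_iSup_abs_le_sum ht fun i ↦ Z i ω
    _ = ∑ i, (mgf (Z i) μ t + mgf (Z i) μ (-t)) := by
        rw [integral_finsetSum Finset.univ fun i _ ↦ hint i]
        refine Finset.sum_congr rfl fun i _ ↦ ?_
        rw [integral_add ((hZ i).integrable_exp_mul t) ((hZ i).integrable_exp_mul (-t))]
        rfl
    _ ≤ ∑ _i : ι, 2 * exp (c * t ^ 2 / 2) := by
        refine Finset.sum_le_sum fun i _ ↦ ?_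
        have h := add_le_add ((hZ i).mgf_le t) ((hZ i).mgf_le (-t))
        rwa [neg_sq, ← two_mul] at h
    _ = 2 * Fintype.card ι * exp (c * t ^ 2 / 2) := by
        rw [Finset.sum_const, Finset.card_univ, nsmul_eq_mul]
        ring

lemma mul_integral_iSup_abs_le [IsProbabilityMeasure μ] (hZ : ∀ i, HasSubgaussianMGF (Z i) c μ)
    {t : ℝ} (ht : 0 ≤ t) :
    t * ∫ ω, ⨆ i, |Z i ω| ∂μ ≤ log (2 * Fintype.card ι) + c * t ^ 2 / 2 := by
  have hjensen : exp (∫ ω, t * ⨆ i, |Z i ω| ∂μ) ≤ ∫ ω, exp (t * ⨆ i, |Z i ω|) ∂μ :=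
    convexOn_exp.map_integral_le continuous_exp.continuousOn isClosed_univ
      (ae_of_all μ fun _ ↦ Set.mem_univ _) ((integrable_iSup_abs hZ).const_mul t)
      (integrable_exp_mul_iSup_abs hZ ht)
  rw [integral_const_mul] at hjensen
  have hpos : (0 : ℝ) < 2 * Fintype.card ι := by positivity
  rw [← exp_le_exp, exp_add, exp_log hpos]
  exact hjensen.trans (integral_exp_mul_iSup_abs_le hZ ht)

theorem integral_iSup_abs_le_sqrt [IsProbabilityMeasure μ]
    (hZ : ∀ i, HasSubgaussianMGF (Z i) c μ) :
    ∫ ω, ⨆ i, |Z i ω| ∂μ ≤ sqrt (2 * c * log (2 * Fintype.card ι)) := by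
  set E := ∫ ω, ⨆ i, |Z i ω| ∂μ
  set L := log (2 * Fintype.card ι)
  rcases le_or_gt E 0 with hE | hE
  · exact hE.trans (sqrt_nonneg _)
  have hL : 0 < L := log_pos (by
    have : (1 : ℝ) ≤ Fintype.card ι := by exact_mod_cast Fintype.card_pos
    linarith)
  -- `t = 2L / E` (rather than the optimal `√(2L / c)`) avoids a case split on `c = 0`.
  have h := mul_integral_iSup_abs_le hZ (t := 2 * L / E) (by positivity)
  rw [div_mul_cancel₀ _ hE.ne'] at h
  have hsq : L * E ^ 2 ≤ L * (2 * c * L) := by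
    field_simp at h
    linarith
  exact le_sqrt_of_sq_le (le_of_mul_le_mul_left hsq hL)

end Maximal

end ProbabilityTheory

open ProbabilityTheory

lemma IsIID.hasSubgaussianMGF_sub {Ω : Type*} [MeasurableSpace Ω] {P : Measure Ω}
    [IsProbabilityMeasure P] {n : ℕ} {X : Fin n → Ω → ℝ} (hX : IsIID P X) {g : ℝ → ℝ}
    (hg : Measurable g) {M : ℝ} (hM : ∀ x, |g x| ≤ M) (l i : Fin n) :
    HasSubgaussianMGF (fun ω ↦ g (X l ω) - ∫ ω, g (X i ω) ∂P) (‖M‖₊ ^ 2) P := by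
  have hident : IdentDistrib (X l) (X i) P P :=
    ⟨(hX.1 l).aemeasurable, (hX.1 i).aemeasurable, hX.2.2 l i⟩
  have hmean : ∫ ω, g (X l ω) ∂P = ∫ ω, g (X i ω) ∂P := (hident.comp hg).integral_eq
  rw [← hmean]
  exact hasSubgaussianMGF_sub_integral_of_abs_le (hg.comp (hX.1 l)).aemeasurable fun ω ↦ hM _

/-- The maximal inequality (via Devroye–Lugosi):
`E[max_{1 ≤ i ≤ n} |∑_{l=1}^{i−1} (g(X_l) − β)|] ≤ ‖g‖_∞ √(2(n−1) ln(2n))`. -/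
theorem statement8 (n : ℕ) (hn : 2 ≤ n)
    (Ω : Type*) [MeasurableSpace Ω] (P : Measure Ω) [IsProbabilityMeasure P]
    (X : Fin n → Ω → ℝ) (hX : IsIID P X)
    (g : ℝ → ℝ) (hg : Measurable g) (hb : ∃ B, ∀ x, |g x| ≤ B)
    (m : ℝ) (hm : m = ∫ ω, g (X ⟨0, by omega⟩ ω) ∂P) :
    (∫ ω, ⨆ i : Fin n, |∑ l ∈ Finset.univ.filter (fun l => l < i), (g (X l ω) - m)| ∂P)
      ≤ supNorm g * Real.sqrt (2 * ((n : ℝ) - 1) * Real.log (2 * n)) := by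
  have : Nonempty (Fin n) := ⟨⟨0, by omega⟩⟩
  obtain ⟨B, hB⟩ := hb
  set M := supNorm g
  have hM : ∀ x, |g x| ≤ M := le_ciSup ⟨B, by rintro _ ⟨x, rfl⟩; exact hB x⟩
  have hcard (i : Fin n) : (Finset.univ.filter fun l => l < i).card ≤ n - 1 := by
    have := Finset.card_lt_univ_of_notMem (s := Finset.univ.filter fun l => l < i) (x := i)
      (by simp)
    rw [Fintype.card_fin] at this
    omega
  have hS (i : Fin n) : HasSubgaussianMGF
      (fun ω ↦ ∑ l ∈ Finset.univ.filter (fun l => l < i), (g (X l ω) - m))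
      ((n - 1 : ℕ) * ‖M‖₊ ^ 2) P := by
    refine (HasSubgaussianMGF.sum_of_iIndepFun
      (hX.2.1.comp _ fun _ ↦ hg.sub measurable_const) fun l _ ↦
        hm ▸ hX.hasSubgaussianMGF_sub hg hM l _).mono ?_
    rw [Finset.sum_const, nsmul_eq_mul]
    gcongr
    exact_mod_cast hcard i
  refine (integral_iSup_abs_le_sqrt hS).trans_eq ?_
  have hM0 : 0 ≤ M := (abs_nonneg _).trans (hM 0)
  have hc : ((((n - 1 : ℕ) : ℝ≥0) * ‖M‖₊ ^ 2 : ℝ≥0) : ℝ) = ((n : ℝ) - 1) * M ^ 2 := by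
    rw [NNReal.coe_mul, NNReal.coe_natCast, Nat.cast_sub (by omega), NNReal.coe_pow, coe_nnnorm,
      Real.norm_of_nonneg hM0, Nat.cast_one]
  have hsplit : 2 * (((n : ℝ) - 1) * M ^ 2) * log (2 * n) = M ^ 2 * (2 * (n - 1) * log (2 * n)) :=
    by ring
  rw [Fintype.card_fin, hc, hsplit, sqrt_mul (sq_nonneg M), sqrt_sq hM0]

end
end

section
/- For every δ > 0 there exists a constant Δ(δ) depending only on δ such that for all n ≥ 2 and all (j,k): E[ η_{jk,γ}² ] ≤ (1+δ)² · 2γ (ln n/n) · D_{jk} + Δ(δ) (γ ln n/n)² ‖ψ_{jk}‖_∞², where D_{jk} = ∫ ψ_{jk}² f. -/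
open MeasureTheory ProbabilityTheory Filter
open scoped ENNReal NNReal BigOperators

noncomputable section

/-! The threshold is a square root of an estimated variance plus a bias term. Two applications of
`(a + b)² ≤ (1 + δ) a² + (1 + 1/δ) b²` bound `η²` pointwise by `(1 + δ)² 2γ (ln n / n) σ̂²` plus a
multiple of `(γ ln n / n)² ‖ψ‖_∞²`, and `σ̂²` is a U-statistic, so `E σ̂² = ∫ ψ² f − β² ≤ ∫ ψ² f`. -/

open Finset

lemma haar_measurable (j k : ℤ) : Measurable (haar j k) := by
  unfold haar
  split_ifs
  · exact measurable_const.indicator measurableSet_Ico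
  · exact ((measurable_const.indicator measurableSet_Ico).sub
      (measurable_const.indicator measurableSet_Ico)).const_mul _

lemma abs_haar_le_haarSupNorm (j k : ℤ) (x : ℝ) : |haar j k x| ≤ haarSupNorm j := by
  have h0 : ∀ s : Set ℝ, 0 ≤ s.indicator (fun _ => (1 : ℝ)) x := fun s =>
    Set.indicator_nonneg (fun _ _ => zero_le_one) x
  have h1 : ∀ s : Set ℝ, s.indicator (fun _ => (1 : ℝ)) x ≤ 1 := fun s =>
    Set.indicator_le_self' (fun _ _ => zero_le_one) x
  unfold haar haarSupNorm
  split_ifs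
  · exact abs_le.2 ⟨by linarith [h0 (Set.Ico (k : ℝ) (k + 1))], h1 _⟩
  · rw [abs_mul, abs_of_pos (by positivity)]
    exact mul_le_of_le_one_right (by positivity)
      (abs_sub_le_of_nonneg_of_le (h0 _) (h1 _) (h0 _) (h1 _))

lemma haarSupNorm_nonneg (j : ℤ) : 0 ≤ haarSupNorm j :=
  (abs_nonneg _).trans (abs_haar_le_haarSupNorm j 0 0)

lemma haarVar_le_integral_sq_mul (f : ℝ → ℝ) (j k : ℤ) :
    haarVar f j k ≤ ∫ x, haar j k x ^ 2 * f x :=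
  sub_le_self _ (sq_nonneg _)

lemma two_mul_mul_le_mul_sq_add_sq_div {δ : ℝ} (hδ : 0 < δ) (a b : ℝ) :
    2 * a * b ≤ δ * a ^ 2 + b ^ 2 / δ := by
  have h : δ * a ^ 2 + b ^ 2 / δ - 2 * a * b = (δ * a - b) ^ 2 / δ := by
    field_simp
    ring
  linarith [div_nonneg (sq_nonneg (δ * a - b)) hδ.le]

lemma add_sq_le_one_add_mul_sq_add {δ : ℝ} (hδ : 0 < δ) (a b : ℝ) :
    (a + b) ^ 2 ≤ (1 + δ) * a ^ 2 + (1 + 1 / δ) * b ^ 2 := by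
  have h := two_mul_mul_le_mul_sq_add_sq_div hδ a b
  rw [div_eq_mul_one_div] at h
  nlinarith [h]

section Threshold

variable {n : ℕ} {δ γ M : ℝ}

lemma empVarG_nonneg (g : ℝ → ℝ) (Y : Fin n → ℝ) : 0 ≤ empVarG g Y := by
  have hn : (0 : ℝ) ≤ n * (n - 1) := by
    rcases n with _ | n
    · simp
    · push_cast
      nlinarith
  exact mul_nonneg (inv_nonneg.2 hn) (sum_nonneg fun i _ => sum_nonneg fun l _ => sq_nonneg _)

lemma tildeVarG_le (hδ : 0 < δ) (hγ : 0 ≤ γ) (g : ℝ → ℝ) (Y : Fin n → ℝ) :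
    tildeVarG γ M g Y ≤ (1 + δ) * empVarG g Y + (2 / δ + 8) * γ * M ^ 2 * (Real.log n / n) := by
  have hs : 0 ≤ empVarG g Y := empVarG_nonneg g Y
  have hγL : 0 ≤ 2 * γ * (Real.log n / n) := by positivity
  have hsqrt : Real.sqrt (2 * γ * empVarG g Y * Real.log n / n)
      = Real.sqrt (empVarG g Y) * Real.sqrt (2 * γ * (Real.log n / n)) := by
    rw [← Real.sqrt_mul hs]
    ring_nf
  have hyoung := two_mul_mul_le_mul_sq_add_sq_div hδ (Real.sqrt (empVarG g Y))
    (M * Real.sqrt (2 * γ * (Real.log n / n)))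
  rw [mul_pow, Real.sq_sqrt hs, Real.sq_sqrt hγL] at hyoung
  have hdiv : M ^ 2 * (2 * γ * (Real.log n / n)) / δ = 2 / δ * γ * M ^ 2 * (Real.log n / n) := by
    ring
  have hlog : 8 * γ * M ^ 2 * Real.log n / n = 8 * γ * M ^ 2 * (Real.log n / n) := by ring
  rw [tildeVarG, hsqrt, hlog]
  linarith

/-- The constant `Δ(δ)` of the bound. -/
def threshConst (δ : ℝ) : ℝ := 2 * (1 + δ) * (2 / δ + 8) + 4 / 9 * (1 + 1 / δ)

lemma threshConst_pos (hδ : 0 < δ) : 0 < threshConst δ := by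
  unfold threshConst
  positivity

lemma sq_threshG_le (hδ : 0 < δ) (hγ : 0 ≤ γ) (hM : 0 ≤ M) (g : ℝ → ℝ) (Y : Fin n → ℝ) :
    threshG γ M g Y ^ 2 ≤ (1 + δ) ^ 2 * 2 * γ * (Real.log n / n) * empVarG g Y
      + threshConst δ * (γ * Real.log n / n) ^ 2 * M ^ 2 := by
  set t := tildeVarG γ M g Y
  set L := Real.log n / n
  have ht : 0 ≤ t := by
    have := empVarG_nonneg g Y
    unfold t tildeVarG
    positivity
  have hroot : Real.sqrt (2 * γ * t * Real.log n / n) ^ 2 = 2 * γ * L * t := by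
    rw [Real.sq_sqrt (div_nonneg (by positivity) n.cast_nonneg)]
    ring
  calc threshG γ M g Y ^ 2
      ≤ (1 + δ) * (2 * γ * L * t) + (1 + 1 / δ) * (2 * M * γ * Real.log n / (3 * n)) ^ 2 := by
        rw [← hroot]
        exact add_sq_le_one_add_mul_sq_add hδ _ _
    _ ≤ (1 + δ) * (2 * γ * L * ((1 + δ) * empVarG g Y + (2 / δ + 8) * γ * M ^ 2 * L))
          + (1 + 1 / δ) * (2 * M * γ * Real.log n / (3 * n)) ^ 2 := by
        gcongr
        exact tildeVarG_le hδ hγ g Y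
    _ = _ := by
        unfold threshConst L
        ring

end Threshold

lemma sum_card_filter_lt (n : ℕ) :
    ∑ i : Fin n, (#{l | l < i} : ℝ) = n * (n - 1) / 2 := by
  have hcard : ∀ i : Fin n, #{l | l < i} = (i : ℕ) := fun i => by
    rw [Finset.filter_gt_eq_Iio, Fin.card_Iio]
  simp only [hcard]
  rw [Fin.sum_univ_eq_sum_range (fun i => (i : ℝ)) n]
  clear hcard
  induction n with
  | zero => simp
  | succ n ih =>
    rw [sum_range_succ, ih]
    push_cast
    ring

section Sample

variable {Ω : Type*} [MeasurableSpace Ω] {P : Measure Ω} {n : ℕ} {X : Fin n → Ω → ℝ}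
  {f g : ℝ → ℝ} {C : ℝ}

lemma integral_comp_eq_integral_mul_density {Y : Ω → ℝ} (hY : Measurable Y) (hf : Measurable f)
    (hf0 : ∀ x, 0 ≤ f x) (hmap : P.map Y = volume.withDensity fun x => ENNReal.ofReal (f x))
    {φ : ℝ → ℝ} (hφ : Measurable φ) :
    ∫ ω, φ (Y ω) ∂P = ∫ x, φ x * f x := by
  rw [← integral_map hY.aemeasurable hφ.aestronglyMeasurable, hmap]
  change ∫ x, φ x ∂volume.withDensity (fun x => ((f x).toNNReal : ℝ≥0∞)) = _
  rw [integral_withDensity_eq_integral_smul hf.real_toNNReal]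
  congr 1 with x
  simp [NNReal.smul_def, Real.coe_toNNReal _ (hf0 x), mul_comm]

variable [IsProbabilityMeasure P]

lemma integrable_of_abs_le {h : Ω → ℝ} (hm : Measurable h) (hC : ∀ ω, |h ω| ≤ C) :
    Integrable h P :=
  .of_bound hm.aestronglyMeasurable C (ae_of_all _ hC)

lemma integrable_sq_sub_comp (hX : ∀ i, Measurable (X i)) (hg : Measurable g)
    (hgC : ∀ x, |g x| ≤ C) (i l : Fin n) :
    Integrable (fun ω => (g (X i ω) - g (X l ω)) ^ 2) P := by
  refine integrable_of_abs_le (C := (2 * C) ^ 2)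
    (((hg.comp (hX i)).sub (hg.comp (hX l))).pow_const 2) fun ω => ?_
  rw [abs_sq, ← sq_abs]
  have hC : |g (X i ω) - g (X l ω)| ≤ 2 * C := by
    linarith [abs_sub (g (X i ω)) (g (X l ω)), hgC (X i ω), hgC (X l ω)]
  exact pow_le_pow_left₀ (abs_nonneg _) hC 2

lemma integral_sq_sub_of_indep (hX : IsIIDSample P X f) (hf : Measurable f) (hf0 : ∀ x, 0 ≤ f x)
    (hg : Measurable g) (hgC : ∀ x, |g x| ≤ C) {i l : Fin n} (hil : i ≠ l) :
    ∫ ω, (g (X i ω) - g (X l ω)) ^ 2 ∂P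
      = 2 * ((∫ x, g x ^ 2 * f x) - (∫ x, g x * f x) ^ 2) := by
  obtain ⟨hXm, hind, hmap⟩ := hX
  have hsq : ∀ m, ∫ ω, g (X m ω) ^ 2 ∂P = ∫ x, g x ^ 2 * f x := fun m =>
    integral_comp_eq_integral_mul_density (hXm m) hf hf0 (hmap m) (hg.pow_const 2)
  have hmean : ∀ m, ∫ ω, g (X m ω) ∂P = ∫ x, g x * f x := fun m =>
    integral_comp_eq_integral_mul_density (hXm m) hf hf0 (hmap m) hg
  have hcross : ∫ ω, g (X i ω) * g (X l ω) ∂P = (∫ x, g x * f x) ^ 2 := by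
    have h := ((hind.indepFun hil).comp hg hg).integral_mul_eq_mul_integral
      (hg.comp (hXm i)).aestronglyMeasurable (hg.comp (hXm l)).aestronglyMeasurable
    simp only [Pi.mul_apply, Function.comp_apply, hmean] at h
    rw [h, sq]
  have hCsq : ∀ x y, |g x * g y| ≤ C * C := fun x y => by
    rw [abs_mul]
    exact mul_le_mul (hgC x) (hgC y) (abs_nonneg _) ((abs_nonneg _).trans (hgC x))
  have hsq_int : ∀ m, Integrable (fun ω => g (X m ω) ^ 2) P := fun m =>
    integrable_of_abs_le ((hg.comp (hXm m)).pow_const 2) fun ω => by rw [sq]; exact hCsq _ _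
  have hcross_int : Integrable (fun ω => 2 * (g (X i ω) * g (X l ω))) P :=
    (integrable_of_abs_le ((hg.comp (hXm i)).mul (hg.comp (hXm l))) fun ω => hCsq _ _).const_mul 2
  have hfirst_int : Integrable (fun ω => g (X i ω) ^ 2 - 2 * (g (X i ω) * g (X l ω))) P :=
    (hsq_int i).sub hcross_int
  have hexpand : (fun ω => (g (X i ω) - g (X l ω)) ^ 2)
      = fun ω => g (X i ω) ^ 2 - 2 * (g (X i ω) * g (X l ω)) + g (X l ω) ^ 2 := by
    ext ω
    ring
  rw [hexpand, integral_add hfirst_int (hsq_int l), integral_sub (hsq_int i) hcross_int,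
    integral_const_mul, hcross, hsq i, hsq l]
  ring

lemma integrable_empVarG (hX : ∀ i, Measurable (X i)) (hg : Measurable g)
    (hgC : ∀ x, |g x| ≤ C) :
    Integrable (fun ω => empVarG g fun i => X i ω) P :=
  (integrable_finsetSum _ fun i _ => integrable_finsetSum _ fun l _ =>
    integrable_sq_sub_comp hX hg hgC i l).const_mul _

lemma integral_empVarG (hn : 2 ≤ n) (hX : IsIIDSample P X f) (hf : Measurable f)
    (hf0 : ∀ x, 0 ≤ f x) (hg : Measurable g) (hgC : ∀ x, |g x| ≤ C) :
    ∫ ω, empVarG g (fun i => X i ω) ∂P = (∫ x, g x ^ 2 * f x) - (∫ x, g x * f x) ^ 2 := by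
  have hterm := integrable_sq_sub_comp (P := P) hX.1 hg hgC
  have hpair : ∀ i, ∀ l ∈ ({l | l < i} : Finset (Fin n)),
      ∫ ω, (g (X i ω) - g (X l ω)) ^ 2 ∂P = 2 * ((∫ x, g x ^ 2 * f x) - (∫ x, g x * f x) ^ 2) :=
    fun i l hl => integral_sq_sub_of_indep hX hf hf0 hg hgC (mem_filter.1 hl).2.ne'
  have hn2 : (2 : ℝ) ≤ n := by exact_mod_cast hn
  have hn0 : (n : ℝ) ≠ 0 := by positivity
  have hn1 : (n : ℝ) - 1 ≠ 0 := by linarith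
  simp only [empVarG]
  rw [integral_const_mul, integral_finsetSum _ fun i _ => integrable_finsetSum _ fun l _ => hterm i l]
  simp_rw [integral_finsetSum _ fun l _ => hterm _ l]
  rw [sum_congr rfl fun i _ => sum_congr rfl (hpair i)]
  simp only [sum_const, nsmul_eq_mul, ← sum_mul, sum_card_filter_lt]
  field_simp

end Sample

/-- The bound (B.5) on the expected squared threshold: for all `δ > 0` there is `Δ(δ)` such that
`E[η_{jk,γ}²] ≤ (1+δ)² 2γ (ln n/n) D_{jk} + Δ(δ) (γ ln n/n)² ‖ψ_{jk}‖_∞²`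
where `D_{jk} = ∫ ψ_{jk}² f`. -/
theorem statement13 (δ : ℝ) (hδ : 0 < δ) :
    ∃ Δ : ℝ, 0 < Δ ∧ ∀ γ : ℝ, 0 < γ → ∀ n : ℕ, 2 ≤ n →
    ∀ (Ω : Type) (_ : MeasurableSpace Ω) (P : Measure Ω), IsProbabilityMeasure P →
    ∀ f : ℝ → ℝ, IsDensity f → MemLp f 2 volume →
    ∀ X : Fin n → Ω → ℝ, IsIIDSample P X f →
    ∀ j k : ℤ, -1 ≤ j →
    (∫ ω, (thresh γ j k (fun i => X i ω)) ^ 2 ∂P) ≤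
      (1 + δ) ^ 2 * 2 * γ * (Real.log n / n) * (∫ x : ℝ, (haar j k x) ^ 2 * f x)
        + Δ * (γ * Real.log n / n) ^ 2 * (haarSupNorm j) ^ 2 := by
  refine ⟨threshConst δ, threshConst_pos hδ, fun γ hγ n hn Ω _ P _ f hf _ X hX j k _ => ?_⟩
  obtain ⟨hfm, hf0, -⟩ := hf
  set A := (1 + δ) ^ 2 * 2 * γ * (Real.log n / n)
  set B := threshConst δ * (γ * Real.log n / n) ^ 2 * haarSupNorm j ^ 2
  have hpointwise : ∀ ω, thresh γ j k (fun i => X i ω) ^ 2 ≤ A * empVar j k (fun i => X i ω) + B :=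
    fun ω => sq_threshG_le hδ hγ.le (haarSupNorm_nonneg j) _ _
  have hint : Integrable (fun ω => empVar j k fun i => X i ω) P :=
    integrable_empVarG hX.1 (haar_measurable j k) (abs_haar_le_haarSupNorm j k)
  calc ∫ ω, thresh γ j k (fun i => X i ω) ^ 2 ∂P
      ≤ ∫ ω, A * empVar j k (fun i => X i ω) + B ∂P :=
        integral_mono_of_nonneg (ae_of_all _ fun _ => sq_nonneg _)
          ((hint.const_mul A).add (integrable_const B)) (ae_of_all _ hpointwise)
    _ = A * haarVar f j k + B := by
        rw [integral_add (hint.const_mul A) (integrable_const B), integral_const_mul,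
          integral_const, probReal_univ, one_smul]
        congr 2
        exact integral_empVarG hn hX hfm hf0 (haar_measurable j k) (abs_haar_le_haarSupNorm j k)
    _ ≤ A * (∫ x, haar j k x ^ 2 * f x) + B := by
        gcongr
        exact haarVar_le_integral_sq_mul f j k

end
end
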